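/- arXiv:2107.02206 — 2 statements merged into one kernel-verified Lean document; each statement's English description precedes it below -/
import Mathlib

section
/- Let v'v'' be an edge of Γ, and let V', V'' be the vertex sets of the two connected components of Γ with this edge removed, where v' ∈ V' and v'' ∈ V''. Let ∅ ≠ J ⊆ V'' and let π_J : ℚ^V → ℚ^J be the coordinate projection. In the group ring ℤ[ℚ^J] there exists an element P whose (finite) support is contained in π_J(S') such that (1 − t^{π_J(E*_{v''})}) · ∏_{v∈V', δ_v ≥ 2}(1 − t^{π_J(E*_v)})^{δ_v − 2} = P · ∏_{v∈V', δ_v = 1}(1 − t^{π_J(E*_v)}); here δ_v denotes the valency of v in the whole tree Γ. Equivalently, (1 − t_J^{E*_{v''}}) · ∏_{v∈V'}(1 − t_J^{E*_v})^{δ_v − 2} is a Laurent polynomial supported on π_J(S'). -/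
open Classical

attribute [local instance 10] Classical.propDecidable

noncomputable section

namespace SWpaper

variable {V : Type} [Fintype V] [DecidableEq V]

/-- The intersection matrix of a tree with integer vertex weights `b`:
diagonal entries `b v`, off-diagonal entries `1` for adjacent vertices, `0` otherwise. -/
def imat (G : SimpleGraph V) (b : V → ℤ) : Matrix V V ℚ :=
  Matrix.of fun u v => if u = v then (b u : ℚ) else if G.Adj u v then 1 else 0

/-- Negative definiteness of a rational matrix. -/
def NegDef (M : Matrix V V ℚ) : Prop :=
  ∀ x : V → ℚ, x ≠ 0 → dotProduct x (M.mulVec x) < 0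

/-- The intersection pairing `(x, y) = xᵀ I y`. -/
def pairing (G : SimpleGraph V) (b : V → ℤ) (x y : V → ℚ) : ℚ :=
  dotProduct x ((imat G b).mulVec y)

/-- The dual base element `E*_v`, the `v`-th column of `-(imat G b)⁻¹`. -/
def Estar (G : SimpleGraph V) (b : V → ℤ) (v : V) : V → ℚ :=
  fun u => -((imat G b)⁻¹ u v)

/-- The `E*`-coordinates of `x`: `coeff G b x v = -(x, E_v)`. -/
def coeff (G : SimpleGraph V) (b : V → ℤ) (x : V → ℚ) : V → ℚ :=
  fun v => -((imat G b).mulVec x v)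

/-- Valency of a vertex. -/
def deg (G : SimpleGraph V) (v : V) : ℕ := (G.neighborSet v).ncard

/-- Generalized binomial coefficient `C(d, n) = d(d-1)⋯(d-n+1)/n!` for `d : ℤ`, `n : ℕ`. -/
def qchoose (d : ℤ) (n : ℕ) : ℚ :=
  (∏ i ∈ Finset.range n, ((d : ℚ) - (i : ℚ))) / (Nat.factorial n : ℚ)

/-- The natural number represented by a rational (its numerator, truncated). -/
def natOf (q : ℚ) : ℕ := q.num.toNat

/-- All values of `x` are nonnegative integers. -/
def IsNatVec {α : Type*} (x : α → ℚ) : Prop := ∀ v, ∃ n : ℕ, x v = (n : ℚ)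

/-- All values of `x` are integers. -/
def IsIntVec {α : Type*} (x : α → ℚ) : Prop := ∀ v, ∃ n : ℤ, x v = (n : ℚ)

/-- The coefficient `z(x)` of the topological Poincaré series
`Z(t) = ∏_v (1 - t^{E*_v})^{δ_v - 2}`. -/
def zcoef (G : SimpleGraph V) (b : V → ℤ) (x : V → ℚ) : ℚ :=
  if IsNatVec (coeff G b x) then
    ∏ v, (-1 : ℚ) ^ natOf (coeff G b x v) *
      qchoose ((deg G v : ℤ) - 2) (natOf (coeff G b x v))
  else 0

/-- The coefficient `r(x)` of the relative series
`R(t) = ∏_v (1 - t^{E*_v})^{δ_v - 2 + a_v}`. -/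
def rcoef (G : SimpleGraph V) (b : V → ℤ) (a : V → ℕ) (x : V → ℚ) : ℚ :=
  if IsNatVec (coeff G b x) then
    ∏ v, (-1 : ℚ) ^ natOf (coeff G b x v) *
      qchoose ((deg G v : ℤ) - 2 + (a v : ℤ)) (natOf (coeff G b x v))
  else 0

/-- Membership in the Lipman cone `S'`. -/
def memS' (G : SimpleGraph V) (b : V → ℤ) (x : V → ℚ) : Prop :=
  ∃ a : V → ℕ, x = ∑ v, (a v : ℚ) • Estar G b v

/-- Membership in the interior `int S'`. -/
def memIntS' (G : SimpleGraph V) (b : V → ℤ) (x : V → ℚ) : Prop :=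
  ∃ a : V → ℚ, (∀ v, 0 < a v) ∧ x = ∑ v, a v • Estar G b v

/-- Membership in the dual lattice `L'`. -/
def memL' (G : SimpleGraph V) (b : V → ℤ) (x : V → ℚ) : Prop :=
  ∃ a : V → ℤ, x = ∑ v, (a v : ℚ) • Estar G b v

/-- `x` and `y` have the same class in `H = L'/L`, i.e. differ by an integral vector. -/
def SameClass (x y : V → ℚ) : Prop := ∀ v, ∃ n : ℤ, x v - y v = (n : ℚ)

/-- Coordinatewise fractional part: the representative `r_{[x]}` with entries in `[0,1)`. -/
def fracPart (x : V → ℚ) : V → ℚ := fun v => Int.fract (x v)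

/-- The anticanonical cycle `Z_K`, determined by `(Z_K, E_v) = b v + 2` for all `v`. -/
def ZK (G : SimpleGraph V) (b : V → ℤ) : V → ℚ :=
  ((imat G b)⁻¹).mulVec (fun v => (b v : ℚ) + 2)

/-- The Riemann–Roch function `χ(x) = -(x, x - Z_K)/2`. -/
def chi (G : SimpleGraph V) (b : V → ℤ) (x : V → ℚ) : ℚ :=
  -(pairing G b x (x - ZK G b)) / 2

/-- The counting function `Q_{[x]}(x) = ∑_{y ∈ S', [y] = [x], y ≱ x} z(y)` (a finite sum). -/
def Q (G : SimpleGraph V) (b : V → ℤ) (x : V → ℚ) : ℚ :=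
  ∑ᶠ y ∈ {y : V → ℚ | memS' G b y ∧ SameClass y x ∧ ¬ x ≤ y}, zcoef G b y

/-- `c` is the normalized Seiberg–Witten invariant of the class `[x0]`:
`c = Q_{[x]}(x) - χ(x) + χ(r_{[x]})` for every `x ∈ (Z_K + int S') ∩ L'` with `[x] = [x0]`. -/
def IsSWat (G : SimpleGraph V) (b : V → ℤ) (x0 : V → ℚ) (c : ℚ) : Prop :=
  ∀ x : V → ℚ, memL' G b x → SameClass x x0 →
    (∃ y, memIntS' G b y ∧ x = ZK G b + y) →
    c = Q G b x - chi G b x + chi G b (fracPart x)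

/-- The virtual cohomology number `h¹_virt(x) = -Q_{[x]}(x) + χ(x) - χ(r_{[x]}) + sw_{[x]}`. -/
def h1virt (G : SimpleGraph V) (b : V → ℤ) (sw : (V → ℚ) → ℚ) (x : V → ℚ) : ℚ :=
  - Q G b x + chi G b x - chi G b (fracPart x) + sw x

/-- The base vector `E_v` as an element of `ℚ^V`. -/
def Epi (v : V) : V → ℚ := Pi.single v 1

/-- The branch of the vertex `v` containing `u`: the connected component of `u`
in the graph obtained from `G` by deleting `v`. -/
def branchSet (G : SimpleGraph V) (v u : V) : Set V :=
  {w : V | ∃ (hw : w ≠ v) (hu : u ≠ v),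
    (G.induce {x : V | x ≠ v}).Reachable ⟨w, hw⟩ ⟨u, hu⟩}

/-- The monomial conditions for `(G, b)`. -/
def MonomialCond (G : SimpleGraph V) (b : V → ℤ) : Prop :=
  ∀ n : V, 3 ≤ deg G n → ∀ u ∈ G.neighborSet n,
    ∃ a : V → ℕ,
      (∀ w, a w ≠ 0 → deg G w = 1 ∧ w ∈ branchSet G n u) ∧
      IsNatVec (fun w => (∑ x, (a x : ℚ) • Estar G b x - Estar G b n) w) ∧
      (∀ w, w ∉ branchSet G n u → (∑ x, (a x : ℚ) • Estar G b x - Estar G b n) w = 0)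

/-- Characteristic vector of a finite set of vertices. -/
def EFset (F : Finset V) : V → ℚ := fun u => if u ∈ F then 1 else 0

/-- The lattice weight `w(x, I) = max_{F ⊆ I} χ(x + E_F)`. -/
def wfun (G : SimpleGraph V) (b : V → ℤ) (x : V → ℚ) (I : Finset V) : ℚ :=
  I.powerset.sup' ⟨∅, Finset.empty_mem_powerset I⟩ (fun F => chi G b (x + EFset F))

/-- The weighted Euler characteristic `χ_w(R(a, bb))` of the rectangle `R(a, bb)`. -/
def chiw (G : SimpleGraph V) (b : V → ℤ) (a bb : V → ℚ) : ℚ :=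
  ∑ᶠ p ∈ {p : (V → ℚ) × Finset V | SameClass p.1 a ∧ a ≤ p.1 ∧ p.1 + EFset p.2 ≤ bb},
    (-1 : ℚ) ^ (p.2.card + 1) * wfun G b p.1 p.2

/-- `V_w`: the set of vertices `u` such that every walk from `u` to `v₀` passes through `w`. -/
def Vw (G : SimpleGraph V) (v₀ w : V) : Set V :=
  {u : V | ∀ p : G.Walk u v₀, w ∈ p.support}

/-- `w` as an element of `V_w`. -/
def wElem (G : SimpleGraph V) (v₀ w : V) : ↥(Vw G v₀ w) :=
  ⟨w, fun p => p.start_mem_support⟩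

/-- The dual operator `j*_w : L' → L'(Γ_w)`, sending `E*_u ↦ E*_u(Γ_w)` for `u ∈ V_w`
and `E*_u ↦ 0` otherwise. -/
def jdual (G : SimpleGraph V) (b : V → ℤ) (v₀ w : V) (x : V → ℚ) : ↥(Vw G v₀ w) → ℚ :=
  ∑ u : ↥(Vw G v₀ w),
    coeff G b x u.1 • Estar (G.induce (Vw G v₀ w)) (fun t => b t.1) u

/-- `r^{Γ_w}(y) = z^{Γ_w}(y) - z^{Γ_w}(y - E*_w(Γ_w))`. -/
def rGw (G : SimpleGraph V) (b : V → ℤ) (v₀ w : V) (y : ↥(Vw G v₀ w) → ℚ) : ℚ :=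
  zcoef (G.induce (Vw G v₀ w)) (fun t => b t.1) y -
    zcoef (G.induce (Vw G v₀ w)) (fun t => b t.1)
      (y - Estar (G.induce (Vw G v₀ w)) (fun t => b t.1) (wElem G v₀ w))

/-- `C(w, x) = ∑_{l ∈ L(Γ_w), l ≥ 0, l_w = 0} r^{Γ_w}(j*_w(x) + l)` (a finite sum). -/
def Cfun (G : SimpleGraph V) (b : V → ℤ) (v₀ w : V) (x : V → ℚ) : ℚ :=
  ∑ᶠ l ∈ {l : ↥(Vw G v₀ w) → ℚ | IsNatVec l ∧ l (wElem G v₀ w) = 0},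
    rGw G b v₀ w (jdual G b v₀ w x + l)

end SWpaper

/-!
Write `f_v = 1 - t^{π_J(E*_v)}`. Reading `I⁻¹ I = 1` at the entries `(j, u)` with `j ∈ J ∌ u`
gives `∑_{t ∼ u} π_J(E*_t) = -b_u · π_J(E*_u)`, where `-b_u > 0` by negative definiteness; so for
every neighbour `w` of `u` the factor `f_w` lies in the ideal generated by `f_u` and the `f_t` for
the other neighbours `t` of `u`. For the branch `B` hanging at `u` from an edge `uw` and disjoint
from `J`, induction over the branch then shows that the product of the leaf factors of `B` divides
both `f_u · Z_B` and `f_w · Z_B`, where `Z_B = ∏_{v ∈ B} f_v^{δ_v - 2}`. Working in the group ring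
of the monoid `π_J(S')` instead of `ℚ^J` makes the support condition on the quotient automatic.
-/

namespace SWpaper

open AddMonoidAlgebra SimpleGraph

section OneSubSingle

variable {k A : Type*} [CommRing k] [AddCommMonoid A]

theorem one_sub_single_add (a c : A) :
    (1 - single (a + c) 1 : k[A]) = (1 - single a 1) + single a 1 * (1 - single c 1) := by
  rw [mul_sub, mul_one, single_mul_single, mul_one]
  ring

def oneSubSingleSubmonoid (I : Ideal k[A]) : AddSubmonoid A where
  carrier := {a | 1 - single a 1 ∈ I}
  zero_mem' := by simp [← one_def]
  add_mem' {a c} ha hc := by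
    show _ ∈ I
    rw [one_sub_single_add]
    exact I.add_mem ha (I.mul_mem_left _ hc)

theorem one_sub_single_mem_of_add_mem {I : Ideal k[A]} {a c : A}
    (hac : 1 - single (a + c) 1 ∈ I) (hc : 1 - single c 1 ∈ I) : (1 - single a 1 : k[A]) ∈ I := by
  rw [eq_sub_of_add_eq (one_sub_single_add a c).symm]
  exact I.sub_mem hac (I.mul_mem_left _ hc)

theorem one_sub_single_mem_span {ι : Type*} (s : Finset ι) (g : ι → A) {a c : A} {n : ℕ}
    (h : a + ∑ i ∈ s, g i = n • c) :
    (1 - single a 1 : k[A]) ∈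
      Ideal.span (insert (1 - single c 1) ((fun i => 1 - single (g i) 1) '' s)) := by
  set M := oneSubSingleSubmonoid (Ideal.span (insert (1 - single c 1 : k[A])
    ((fun i => 1 - single (g i) 1) '' s)))
  have hc : c ∈ M := Ideal.subset_span (Set.mem_insert _ _)
  have hg : ∀ i ∈ s, g i ∈ M := fun i hi =>
    Ideal.subset_span (Set.mem_insert_of_mem _ ⟨i, hi, rfl⟩)
  exact one_sub_single_mem_of_add_mem (h ▸ M.nsmul_mem hc n) (M.sum_mem hg)

end OneSubSingle

theorem dvd_mul_of_mem_span {R : Type*} [CommRing R] {S : Set R} {d y z : R}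
    (h : ∀ x ∈ S, d ∣ x * y) (hz : z ∈ Ideal.span S) : d ∣ z * y := by
  induction hz using Submodule.span_induction with
  | mem x hx => exact h x hx
  | zero => simp
  | add x z _ _ hx hz => rw [add_mul]; exact dvd_add hx hz
  | smul r x _ hx => rw [smul_eq_mul, mul_assoc]; exact hx.mul_left r

theorem prod_dvd_mul_pow_mul_prod {M ι : Type*} [CommMonoid M] [DecidableEq ι] {s : Finset ι}
    {L B : ι → M} {c x : M} {t : ι} (hc : ∀ i ∈ s, L i ∣ c * B i) (ht : t ∈ s)
    (hx : L t ∣ x * B t) : ∏ i ∈ s, L i ∣ x * (c ^ (s.card - 1) * ∏ i ∈ s, B i) := by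
  rw [← Finset.mul_prod_erase s L ht, ← Finset.mul_prod_erase s B ht,
    ← Finset.card_erase_of_mem ht, ← Finset.prod_const, mul_left_comm _ (B t), ← mul_assoc,
    ← Finset.prod_mul_distrib]
  exact mul_dvd_mul hx (Finset.prod_dvd_prod_of_dvd _ _ fun i hi => hc i (Finset.mem_of_mem_erase hi))

section Branch

variable {V : Type} [Fintype V] {G : SimpleGraph V}

def branch (G : SimpleGraph V) (u w : V) : Finset V :=
  Finset.univ.filter fun x => (G.deleteEdges {s(u, w)}).Reachable x u

theorem mem_branch {u w x : V} : x ∈ branch G u w ↔ (G.deleteEdges {s(u, w)}).Reachable x u := by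
  simp [branch]

theorem self_mem_branch (u w : V) : u ∈ branch G u w := mem_branch.2 .rfl

omit [Fintype V] in
theorem not_reachable_deleteEdges (hT : G.IsTree) {u w : V} (h : G.Adj u w) :
    ¬ (G.deleteEdges {s(u, w)}).Reachable u w :=
  isAcyclic_iff_forall_adj_isBridge.1 hT.isAcyclic h

theorem disjoint_branch_swap (hT : G.IsTree) {u w : V} (h : G.Adj u w) :
    Disjoint (branch G u w) (branch G w u) := by
  refine Finset.disjoint_left.2 fun x hu hw => not_reachable_deleteEdges hT h ?_
  rw [mem_branch, Sym2.eq_swap] at hw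
  exact (mem_branch.1 hu).symm.trans hw

omit [Fintype V] in
theorem notMem_support_of_notMem_edges (hT : G.IsTree) {t u x : V} (h : G.Adj t u)
    (p : G.Walk x t) (hp : s(t, u) ∉ p.edges) : u ∉ p.support := fun hu =>
  not_reachable_deleteEdges hT h (reachable_deleteEdges_iff_exists_walk.2
    ⟨p.dropUntil u hu, fun he => hp (p.edges_dropUntil_subset_edges hu he)⟩).symm

theorem branch_subset (hT : G.IsTree) {u w t : V} (hut : G.Adj u t) (htw : t ≠ w) :
    branch G t u ⊆ branch G u w := by
  intro x hx
  obtain ⟨p, hp⟩ := reachable_deleteEdges_iff_exists_walk.1 (mem_branch.1 hx)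
  have hu := notMem_support_of_notMem_edges hT hut.symm p hp
  refine mem_branch.2 (reachable_deleteEdges_iff_exists_walk.2 ⟨p.concat hut.symm, ?_⟩)
  rw [Walk.edges_concat, List.concat_eq_append, List.mem_append, List.mem_singleton, not_or]
  refine ⟨fun he => hu (p.fst_mem_support_of_mem_edges he), ?_⟩
  rw [Sym2.eq_swap, Sym2.eq_iff]
  grind

theorem exists_mem_branch [DecidableEq V] {u w x : V} (hx : x ∈ branch G u w) (hxu : x ≠ u) :
    ∃ t ∈ (G.neighborFinset u).erase w, x ∈ branch G t u := by
  obtain ⟨p, hp⟩ := reachable_deleteEdges_iff_exists_walk.1 (mem_branch.1 hx).symm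
  obtain ⟨q, hq, hqe⟩ : ∃ q : G.Walk u x, q.IsPath ∧ s(u, w) ∉ q.edges :=
    ⟨p.bypass, p.bypass_isPath, fun h => hp (p.edges_bypass_subset_edges h)⟩
  cases q with
  | nil => exact absurd rfl hxu
  | @cons _ t _ hut q =>
    rw [Walk.cons_isPath_iff] at hq
    rw [Walk.edges_cons, List.mem_cons, not_or, Sym2.eq_iff] at hqe
    refine ⟨t, Finset.mem_erase.2 ⟨by grind, (mem_neighborFinset ..).2 hut⟩, ?_⟩
    refine mem_branch.2 (reachable_deleteEdges_iff_exists_walk.2 ⟨q.reverse, fun he => ?_⟩)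
    rw [Walk.edges_reverse, List.mem_reverse] at he
    exact hq.2 (q.snd_mem_support_of_mem_edges he)

theorem branch_eq [DecidableEq V] (hT : G.IsTree) (u w : V) :
    branch G u w = insert u (((G.neighborFinset u).erase w).biUnion fun t => branch G t u) := by
  ext x
  simp only [Finset.mem_insert, Finset.mem_biUnion]
  constructor
  · intro hx
    by_cases hxu : x = u
    · exact .inl hxu
    · exact .inr (exists_mem_branch hx hxu)
  · rintro (rfl | ⟨t, ht, hx⟩)
    · exact self_mem_branch _ _
    · rw [Finset.mem_erase, mem_neighborFinset] at ht
      exact branch_subset hT ht.2 ht.1 hx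

theorem prod_branch [DecidableEq V] {M : Type*} [CommMonoid M] (hT : G.IsTree) (u w : V) (F : V → M) :
    ∏ v ∈ branch G u w, F v = F u * ∏ t ∈ (G.neighborFinset u).erase w, ∏ v ∈ branch G t u, F v := by
  rw [branch_eq hT, Finset.prod_insert, Finset.prod_biUnion]
  · intro t₁ ht₁ t₂ ht₂ h
    simp only [Finset.coe_erase, Set.mem_sdiff, Finset.mem_coe, mem_neighborFinset] at ht₁ ht₂
    exact Finset.disjoint_of_subset_right (branch_subset hT ht₂.1 h.symm)
      (disjoint_branch_swap hT ht₁.1.symm)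
  · rw [Finset.mem_biUnion]
    rintro ⟨t, ht, hu⟩
    exact Finset.disjoint_left.1 (disjoint_branch_swap hT ((mem_neighborFinset ..).1
      (Finset.mem_of_mem_erase ht))) (self_mem_branch u t) hu

theorem card_branch_lt (hT : G.IsTree) {u w t : V} (hut : G.Adj u t) (htw : t ≠ w) :
    (branch G t u).card < (branch G u w).card :=
  Finset.card_lt_card ⟨branch_subset hT hut htw, fun h => Finset.disjoint_left.1
    (disjoint_branch_swap hT hut) (self_mem_branch u t) (h (self_mem_branch u w))⟩

theorem deg_eq_card_neighborFinset (v : V) : deg G v = (G.neighborFinset v).card := by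
  rw [deg, ← Set.ncard_coe_finset, coe_neighborFinset]

end Branch

section IntersectionMatrix

variable {V : Type} [Fintype V] [DecidableEq V] {G : SimpleGraph V} {b : V → ℤ}

omit [Fintype V] in
theorem imat_eq_diagonal_add_adjMatrix (G : SimpleGraph V) (b : V → ℤ) :
    imat G b = Matrix.diagonal (fun v => (b v : ℚ)) + G.adjMatrix ℚ := by
  ext u v
  by_cases h : u = v
  · subst h; simp [imat]
  · simp [imat, h, adjMatrix_apply]

theorem weight_neg_of_negDef (hND : NegDef (imat G b)) (v : V) : b v < 0 := by
  have h := hND (Pi.single v 1) (by simp)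
  simpa [imat] using h

theorem isUnit_det_of_negDef (hND : NegDef (imat G b)) : IsUnit (imat G b).det := by
  rw [isUnit_iff_ne_zero]
  intro h
  obtain ⟨x, hx, hMx⟩ := Matrix.exists_mulVec_eq_zero_iff.2 h
  simpa [hMx] using hND x hx

theorem sum_Estar_neighborFinset (hND : NegDef (imat G b)) {u j : V} (hj : j ≠ u) :
    ∑ t ∈ G.neighborFinset u, Estar G b t j = -(b u) * Estar G b u j := by
  have h := congr_fun₂ (Matrix.nonsing_inv_mul _ (isUnit_det_of_negDef hND)) j u
  nth_rewrite 2 [imat_eq_diagonal_add_adjMatrix] at h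
  rw [Matrix.mul_add, Matrix.add_apply, Matrix.mul_diagonal, mul_adjMatrix_apply,
    Matrix.one_apply_ne hj] at h
  simp only [Estar, Finset.sum_neg_distrib]
  linarith

end IntersectionMatrix

section Cone

variable {V : Type} [Fintype V] [DecidableEq V] (G : SimpleGraph V) (b : V → ℤ) (J : Finset V)

def lipmanCone : AddSubmonoid (V → ℚ) := AddSubmonoid.closure (Set.range (Estar G b))

theorem memS'_iff_mem_lipmanCone {y : V → ℚ} : memS' G b y ↔ y ∈ lipmanCone G b := by
  simp only [memS', lipmanCone, AddSubmonoid.mem_closure_range_iff_of_fintype,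
    Nat.cast_smul_eq_nsmul]

/-- `π_J(S')`. -/
def restrictedLipmanCone : AddSubmonoid (J → ℚ) :=
  (lipmanCone G b).map (LinearMap.funLeft ℚ ℚ ((↑) : J → V))

def restrictedEstar (v : V) : restrictedLipmanCone G b J :=
  ⟨fun j => Estar G b v j,
    AddSubmonoid.mem_map_of_mem _ (AddSubmonoid.subset_closure (Set.mem_range_self v))⟩

variable {G b J}

theorem sum_restrictedEstar_neighborFinset (hND : NegDef (imat G b)) {u : V} (hu : u ∉ J) :
    ∑ t ∈ G.neighborFinset u, restrictedEstar G b J t = (-b u).toNat • restrictedEstar G b J u := by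
  apply Subtype.ext
  funext j
  have hj : (j : V) ≠ u := fun h => hu (h ▸ j.2)
  have hb : ((-b u).toNat : ℚ) = -(b u) := by
    exact_mod_cast Int.toNat_of_nonneg (by linarith [weight_neg_of_negDef hND u])
  simp only [AddSubmonoid.coe_finsetSum, AddSubmonoidClass.coe_nsmul, Finset.sum_apply,
    Pi.smul_apply, restrictedEstar, nsmul_eq_mul, sum_Estar_neighborFinset hND hj, hb]

end Cone

section Induction

variable {V : Type} [Fintype V] [DecidableEq V] {G : SimpleGraph V} {b : V → ℤ} {J : Finset V}

variable (G b J)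

def oneSubMonomial (v : V) : AddMonoidAlgebra ℤ (restrictedLipmanCone G b J) :=
  1 - single (restrictedEstar G b J v) 1

def poincareProd (s : Finset V) : AddMonoidAlgebra ℤ (restrictedLipmanCone G b J) :=
  ∏ v ∈ s, oneSubMonomial G b J v ^ (deg G v - 2)

def leafProd (s : Finset V) : AddMonoidAlgebra ℤ (restrictedLipmanCone G b J) :=
  ∏ v ∈ s, if deg G v = 1 then oneSubMonomial G b J v else 1

variable {G b J}

theorem leafProd_branch (hT : G.IsTree) (u w : V) :
    leafProd G b J (branch G u w) = (if deg G u = 1 then oneSubMonomial G b J u else 1) *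
      ∏ t ∈ (G.neighborFinset u).erase w, leafProd G b J (branch G t u) := by
  unfold leafProd
  rw [prod_branch hT u w]

theorem poincareProd_branch (hT : G.IsTree) (u w : V) :
    poincareProd G b J (branch G u w) = oneSubMonomial G b J u ^ (deg G u - 2) *
      ∏ t ∈ (G.neighborFinset u).erase w, poincareProd G b J (branch G t u) := by
  unfold poincareProd
  rw [prod_branch hT u w]

theorem leafProd_branch_dvd (hT : G.IsTree) (hND : NegDef (imat G b)) (u w : V)
    (huw : G.Adj u w) (hJ : Disjoint J (branch G u w)) :
    leafProd G b J (branch G u w) ∣ oneSubMonomial G b J u * poincareProd G b J (branch G u w) ∧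
      leafProd G b J (branch G u w) ∣ oneSubMonomial G b J w * poincareProd G b J (branch G u w) := by
  induction hn : (branch G u w).card using Nat.strong_induction_on generalizing u w with
  | _ n ih =>
  set f := oneSubMonomial G b J
  set C := (G.neighborFinset u).erase w
  have hchild : ∀ t ∈ C,
      leafProd G b J (branch G t u) ∣ f t * poincareProd G b J (branch G t u) ∧
        leafProd G b J (branch G t u) ∣ f u * poincareProd G b J (branch G t u) := by
    intro t ht
    have hut : G.Adj u t := (mem_neighborFinset ..).1 (Finset.mem_of_mem_erase ht)
    have htw := Finset.ne_of_mem_erase ht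
    exact ih _ (hn ▸ card_branch_lt hT hut htw) t u hut.symm
      (hJ.mono_right (branch_subset hT hut htw)) rfl
  have hdeg : deg G u = C.card + 1 := by
    rw [deg_eq_card_neighborFinset, Finset.card_erase_add_one ((mem_neighborFinset ..).2 huw)]
  have hL : leafProd G b J (branch G u w)
      = (if deg G u = 1 then f u else 1) * ∏ t ∈ C, leafProd G b J (branch G t u) :=
    leafProd_branch hT u w
  have hP : poincareProd G b J (branch G u w)
      = f u ^ (C.card - 1) * ∏ t ∈ C, poincareProd G b J (branch G t u) := by
    rw [poincareProd_branch hT, hdeg, Nat.add_sub_add_right]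
  have hgen : ∀ x ∈ insert (f u) (f '' C),
      leafProd G b J (branch G u w) ∣ x * poincareProd G b J (branch G u w) := by
    rw [hL, hP]
    rcases C.eq_empty_or_nonempty with hC | ⟨t₀, ht₀⟩
    · simp [hC, hdeg]
    · rw [if_neg (by have := Finset.card_pos.2 ⟨t₀, ht₀⟩; omega), one_mul]
      rintro x (rfl | ⟨t, ht, rfl⟩)
      · exact prod_dvd_mul_pow_mul_prod (fun t ht => (hchild t ht).2) ht₀ (hchild t₀ ht₀).2
      · exact prod_dvd_mul_pow_mul_prod (fun t ht => (hchild t ht).2) ht (hchild t ht).1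
  have hw : f w ∈ Ideal.span (insert (f u) (f '' C)) := by
    refine one_sub_single_mem_span C (restrictedEstar G b J) (n := (-b u).toNat) ?_
    rw [← Finset.sum_insert (Finset.notMem_erase w _),
      Finset.insert_erase ((mem_neighborFinset ..).2 huw),
      sum_restrictedEstar_neighborFinset hND (Finset.disjoint_right.1 hJ (self_mem_branch u w))]
  exact ⟨hgen _ (Set.mem_insert _ _), dvd_mul_of_mem_span hgen hw⟩

end Induction

section Restriction

variable {V : Type} [Fintype V] [DecidableEq V] {G : SimpleGraph V} {b : V → ℤ} {J : Finset V}

theorem mapDomain_oneSubMonomial (v : V) :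
    mapDomainRingHom ℤ (restrictedLipmanCone G b J).subtype (oneSubMonomial G b J v)
      = 1 - single (fun j : J => Estar G b v j) 1 := by
  rw [oneSubMonomial, map_sub, map_one, mapDomainRingHom_apply, mapDomain_single]
  rfl

theorem mapDomain_poincareProd (s : Finset V) :
    mapDomainRingHom ℤ (restrictedLipmanCone G b J).subtype (poincareProd G b J s)
      = ∏ v ∈ s.filter (2 ≤ deg G ·), (1 - single (fun j : J => Estar G b v j) 1) ^ (deg G v - 2) := by
  rw [poincareProd, map_prod, Finset.prod_filter_of_ne fun v _ h => ?_]
  · simp only [map_pow, mapDomain_oneSubMonomial]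
  · by_contra hv
    rw [Nat.sub_eq_zero_of_le (by omega), pow_zero] at h
    exact h rfl

theorem mapDomain_leafProd (s : Finset V) :
    mapDomainRingHom ℤ (restrictedLipmanCone G b J).subtype (leafProd G b J s)
      = ∏ v ∈ s.filter (deg G · = 1), (1 - single (fun j : J => Estar G b v j) 1) := by
  simp only [leafProd, map_prod, apply_ite, map_one, mapDomain_oneSubMonomial, Finset.prod_filter]

theorem exists_memS'_of_mem_support_mapDomain {P : AddMonoidAlgebra ℤ (restrictedLipmanCone G b J)}
    {m : J → ℚ} (hm : m ∈ (mapDomainRingHom ℤ (restrictedLipmanCone G b J).subtype P).coeff.support) :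
    ∃ y : V → ℚ, memS' G b y ∧ m = fun j => y j.1 := by
  obtain ⟨a, -, rfl⟩ := Finset.mem_image.1 (Finsupp.mapDomain_support hm)
  obtain ⟨y, hy, hya⟩ := AddSubmonoid.mem_map.1 a.2
  exact ⟨y, (memS'_iff_mem_lipmanCone G b).2 hy, hya.symm⟩

end Restriction

theorem statement7_general {V : Type} [Fintype V] [DecidableEq V]
    (G : SimpleGraph V) (b : V → ℤ)
    (hT : G.IsTree) (hND : NegDef (imat G b))
    (v' v'' : V) (hadj : G.Adj v' v'')
    (J : Finset V)
    (hJ : ∀ j ∈ J, (G.deleteEdges {s(v', v'')}).Reachable j v'') :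
    ∃ P : AddMonoidAlgebra ℤ ({x // x ∈ J} → ℚ),
      (∀ m ∈ P.coeff.support, ∃ y : V → ℚ, memS' G b y ∧ m = fun j => y j.1) ∧
      (1 - AddMonoidAlgebra.single (fun j : {x // x ∈ J} => Estar G b v'' j.1) (1 : ℤ)) *
        (∏ v ∈ Finset.univ.filter (fun v =>
            (G.deleteEdges {s(v', v'')}).Reachable v v' ∧ 2 ≤ deg G v),
          (1 - AddMonoidAlgebra.single (fun j : {x // x ∈ J} => Estar G b v j.1) (1 : ℤ))
            ^ (deg G v - 2))
      = P * ∏ v ∈ Finset.univ.filter (fun v =>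
            (G.deleteEdges {s(v', v'')}).Reachable v v' ∧ deg G v = 1),
          (1 - AddMonoidAlgebra.single (fun j : {x // x ∈ J} => Estar G b v j.1) (1 : ℤ)) := by
  have hJ' : Disjoint J (branch G v' v'') := Finset.disjoint_left.2 fun j hj hj' =>
    not_reachable_deleteEdges hT hadj ((mem_branch.1 hj').symm.trans (hJ j hj))
  obtain ⟨P, hP⟩ := (leafProd_branch_dvd hT hND v' v'' hadj hJ').2
  set φ := mapDomainRingHom ℤ (restrictedLipmanCone G b J).subtype
  refine ⟨φ P, fun m hm => exists_memS'_of_mem_support_mapDomain hm, ?_⟩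
  have h := congrArg φ hP
  rw [map_mul, map_mul, mapDomain_oneSubMonomial, mapDomain_poincareProd, mapDomain_leafProd,
    mul_comm _ (φ P)] at h
  rw [branch, Finset.filter_filter, Finset.filter_filter] at h
  -- the two sides differ only in the `Decidable` instances of the filters
  convert h using 4

/-- Lemma `redlaurent` of the paper. The two components of the tree with
the edge `v'v''` removed are described by reachability in `G.deleteEdges {s(v',v'')}`. -/
theorem statement7 {V : Type} [Fintype V] [DecidableEq V]
    (G : SimpleGraph V) (b : V → ℤ)
    (hT : G.IsTree) (hND : NegDef (imat G b))
    (v' v'' : V) (hadj : G.Adj v' v'')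
    (J : Finset V) (hJne : J.Nonempty)
    (hJ : ∀ j ∈ J, (G.deleteEdges {s(v', v'')}).Reachable j v'') :
    ∃ P : AddMonoidAlgebra ℤ ({x // x ∈ J} → ℚ),
      (∀ m ∈ P.coeff.support, ∃ y : V → ℚ, memS' G b y ∧ m = fun j => y j.1) ∧
      (1 - AddMonoidAlgebra.single (fun j : {x // x ∈ J} => Estar G b v'' j.1) (1 : ℤ)) *
        (∏ v ∈ Finset.univ.filter (fun v =>
            (G.deleteEdges {s(v', v'')}).Reachable v v' ∧ 2 ≤ deg G v),
          (1 - AddMonoidAlgebra.single (fun j : {x // x ∈ J} => Estar G b v j.1) (1 : ℤ))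
            ^ (deg G v - 2))
      = P * ∏ v ∈ Finset.univ.filter (fun v =>
            (G.deleteEdges {s(v', v'')}).Reachable v v' ∧ deg G v = 1),
          (1 - AddMonoidAlgebra.single (fun j : {x // x ∈ J} => Estar G b v j.1) (1 : ℤ)) :=
  statement7_general G b hT hND v' v'' hadj J hJ

end SWpaper
end
end

section
/- Every coordinate of every dual cycle E*_u is strictly positive; equivalently, all entries of the matrix −I^{−1} are strictly positive. -/
open Classical

attribute [local instance 10] Classical.propDecidable

noncomputable section

/-! The matrix `-I` is positive definite with nonpositive off-diagonal entries, i.e. a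
nonsingular M-matrix, so `-I` is monotone (`-I y ≥ 0 → y ≥ 0`) and `-I⁻¹ ≥ 0` entrywise.
A zero coordinate of the column `y = E*_u` propagates to every neighbour, because
`(I y)_i = ∑_k I_ik y_k ≤ 0` is then a sum of nonnegative terms; as the tree is connected
and `y ≠ 0`, no coordinate vanishes. -/

namespace Matrix

variable {n R : Type*} [Fintype n]

theorem isUnit_det_of_forall_dotProduct_mulVec_neg [DecidableEq n] [Field R] [Preorder R]
    {M : Matrix n n R} (hM : ∀ x : n → R, x ≠ 0 → x ⬝ᵥ M *ᵥ x < 0) : IsUnit M.det := by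
  refine isUnit_iff_ne_zero.mpr fun hdet => ?_
  obtain ⟨v, hv0, hv⟩ := exists_mulVec_eq_zero_iff.mpr hdet
  simpa [hv] using hM v hv0

variable [Field R] [LinearOrder R] [IsStrictOrderedRing R] {M : Matrix n n R}

theorem dotProduct_mulVec_nonneg_of_mul_eq_zero (hoff : ∀ i j, i ≠ j → 0 ≤ M i j)
    {x y : n → R} (hx : 0 ≤ x) (hy : 0 ≤ y) (hxy : ∀ i, x i * y i = 0) :
    0 ≤ x ⬝ᵥ M *ᵥ y := by
  refine Finset.sum_nonneg fun i _ => ?_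
  simp only [mulVec, dotProduct, Finset.mul_sum]
  refine Finset.sum_nonneg fun j _ => ?_
  by_cases hij : i = j
  · subst hij
    rw [mul_left_comm, hxy, mul_zero]
  · exact mul_nonneg (hx i) (mul_nonneg (hoff i j hij) (hy j))

/-- The negative part satisfies `y⁻ᵀ M y⁻ = y⁻ᵀ M y⁺ - y⁻ᵀ M y ≥ 0`, since `y⁻` and `y⁺`
have disjoint supports; definiteness forces `y⁻ = 0`. -/
theorem nonneg_of_mulVec_nonpos (hneg : ∀ x : n → R, x ≠ 0 → x ⬝ᵥ M *ᵥ x < 0)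
    (hoff : ∀ i j, i ≠ j → 0 ≤ M i j) {y : n → R} (hy : M *ᵥ y ≤ 0) : 0 ≤ y := by
  have hcross : 0 ≤ y⁻ ⬝ᵥ M *ᵥ y⁺ := by
    refine dotProduct_mulVec_nonneg_of_mul_eq_zero hoff (negPart_nonneg y) (posPart_nonneg y)
      fun i => ?_
    rcases le_total (y i) 0 with h | h
    · simp [posPart_eq_zero.mpr h]
    · simp [negPart_eq_zero.mpr h]
  have hdiff : y⁺ - y = y⁻ := by
    simpa only [posPart_sub_negPart] using sub_sub_cancel y⁺ y⁻
  have hsplit : y⁻ ⬝ᵥ M *ᵥ y⁻ = y⁻ ⬝ᵥ M *ᵥ y⁺ - y⁻ ⬝ᵥ M *ᵥ y := by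
    rw [← dotProduct_sub, ← mulVec_sub, hdiff]
  have hy' : y⁻ ⬝ᵥ M *ᵥ y ≤ 0 := by
    simpa using dotProduct_nonneg_of_nonneg (negPart_nonneg y) (neg_nonneg.mpr hy)
  have hzero : y⁻ = 0 := by
    by_contra h
    linarith [hneg _ h]
  exact negPart_eq_zero.mp hzero

theorem eq_zero_of_mulVec_nonpos_of_eq_zero (hoff : ∀ i j, i ≠ j → 0 ≤ M i j)
    {y : n → R} (hy : 0 ≤ y) (hMy : M *ᵥ y ≤ 0) {i j : n} (hMij : M i j ≠ 0)
    (hi : y i = 0) : y j = 0 := by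
  have hterm : ∀ k ∈ Finset.univ, 0 ≤ M i k * y k := fun k _ => by
    by_cases hik : i = k
    · rw [← hik, hi, mul_zero]
    · exact mul_nonneg (hoff i k hik) (hy k)
  have hsum : ∑ k, M i k * y k = 0 := le_antisymm (hMy i) (Finset.sum_nonneg hterm)
  have hij := (Finset.sum_eq_zero_iff_of_nonneg hterm).mp hsum j (Finset.mem_univ j)
  exact (mul_eq_zero.mp hij).resolve_left hMij

theorem pos_of_mulVec_nonpos_of_connected {G : SimpleGraph n} (hG : G.Connected)
    (hoff : ∀ i j, i ≠ j → 0 ≤ M i j) (hadj : ∀ i j, G.Adj i j → M i j ≠ 0)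
    {y : n → R} (hy : 0 ≤ y) (hMy : M *ᵥ y ≤ 0) (hy0 : y ≠ 0) (i : n) : 0 < y i := by
  have hwalk : ∀ {a c : n}, G.Walk a c → y a = 0 → y c = 0 := by
    intro a c p
    induction p with
    | nil => exact id
    | cons h _ ih => exact fun ha => ih (eq_zero_of_mulVec_nonpos_of_eq_zero hoff hy hMy
        (hadj _ _ h) ha)
  obtain ⟨j, hj⟩ := Function.ne_iff.mp hy0
  exact (hy i).lt_of_ne fun hi => hj (hwalk (hG i j).some hi.symm)

end Matrix

namespace SWpaper

open Matrix

section

variable {V : Type} [DecidableEq V] (G : SimpleGraph V) (b : V → ℤ)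

theorem imat_nonneg_of_ne (i j : V) (hij : i ≠ j) : 0 ≤ imat G b i j := by
  simp only [imat, of_apply, if_neg hij]
  split_ifs <;> norm_num

theorem imat_ne_zero_of_adj (i j : V) (h : G.Adj i j) : imat G b i j ≠ 0 := by
  simp [imat, G.ne_of_adj h, h]

theorem imat_mulVec_Estar [Fintype V] (h : IsUnit (imat G b).det) (u : V) :
    imat G b *ᵥ Estar G b u = -Pi.single u 1 := by
  have hcol : Estar G b u = -((imat G b)⁻¹ *ᵥ Pi.single u 1) := by
    ext w
    simp [Estar]
  rw [hcol, mulVec_neg, mulVec_mulVec, mul_nonsing_inv _ h, one_mulVec]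

end

/-- all coordinates of every dual cycle `E*_u` are strictly positive. -/
theorem statement15 {V : Type} [Fintype V] [DecidableEq V]
    (G : SimpleGraph V) (b : V → ℤ)
    (hT : G.IsTree) (hND : NegDef (imat G b)) :
    ∀ u w : V, 0 < Estar G b u w := by
  intro u
  have hcol := imat_mulVec_Estar G b (isUnit_det_of_forall_dotProduct_mulVec_neg hND) u
  have hMy : imat G b *ᵥ Estar G b u ≤ 0 := by
    rw [hcol]
    exact neg_nonpos.mpr (Pi.single_nonneg.mpr zero_le_one)
  have hy0 : Estar G b u ≠ 0 := fun h => by simpa [h] using congrFun hcol u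
  have hoff := imat_nonneg_of_ne G b
  exact pos_of_mulVec_nonpos_of_connected hT.connected hoff (imat_ne_zero_of_adj G b)
    (nonneg_of_mulVec_nonpos hND hoff hMy) hMy hy0

end SWpaper
end
end
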